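/- Let H ⊊ K be a nonempty proper subset and let 𝔖_H be the unique function on K with (L𝔖_H)(x) + 1 = 0 for all x ∈ H and 𝔖_H(x) = 0 for all x ∉ H (the mean escape time from H). Then ∑_{x ∉ H} ∑_{y ∈ H} ρ^s(x) k(x,y) 𝔖_H(y) = ρ^s(H), where ρ^s(H) = ∑_{x ∈ H} ρ^s(x). -/

import Mathlib

/-!
Stationarity of `ρˢ` says `∑ₓ ρˢ(x) (L𝔖_H)(x) = ρˢ L 𝔖_H = 0`. On `H` the summand is `-ρˢ(x)`;
off `H`, where `𝔖_H` vanishes, `(L𝔖_H)(x) = ∑_{y ∈ H} k(x,y) 𝔖_H(y)`. Splitting the sum over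
`H` and `Hᶜ` gives the sum rule.
-/

open scoped Classical

/-- The backward generator `L` of the Markov jump process with rates `k`:
`L x y = k x y` for `x ≠ y` and `L x x = -∑_{z ≠ x} k x z`. -/
noncomputable def gen {K : Type*} [Fintype K] [DecidableEq K] (k : K → K → ℝ) :
    Matrix K K ℝ :=
  Matrix.of fun x y => if x = y then -∑ z ∈ Finset.univ.erase x, k x z else k x y

/-- Strong connectivity (irreducibility) of the digraph with an arc `(x,y)` whenever
`k x y > 0`. -/
def StronglyConnected {K : Type*} (k : K → K → ℝ) : Prop :=
  ∀ x y : K, Relation.ReflTransGen (fun a b => 0 < k a b) x y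

open Finset Matrix

theorem gen_mulVec_apply {K : Type*} [Fintype K] [DecidableEq K] (k : K → K → ℝ) (f : K → ℝ)
    (x : K) : (gen k *ᵥ f) x = ∑ y, k x y * (f y - f x) := by
  have hoff : ∀ y ∈ univ.erase x, gen k x y * f y = k x y * f y := fun y hy => by
    simp [gen, (ne_of_mem_erase hy).symm]
  rw [mulVec, dotProduct, ← add_sum_erase _ _ (mem_univ x), ← add_sum_erase _ _ (mem_univ x),
    sum_congr rfl hoff]
  simp only [gen, of_apply, if_true, sub_self, mul_zero, zero_add, mul_sub, sum_sub_distrib,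
    ← sum_mul]
  ring

theorem sum_mul_gen_mulVec_eq_zero {K : Type*} [Fintype K] [DecidableEq K] {k : K → K → ℝ}
    {ρ : K → ℝ} (hρ : vecMul ρ (gen k) = 0) (f : K → ℝ) :
    ∑ x, ρ x * ∑ y, k x y * (f y - f x) = 0 := by
  simp_rw [← gen_mulVec_apply]
  simpa [hρ, dotProduct] using dotProduct_mulVec ρ (gen k) f

theorem escape_time_sum_rule_general
    {K : Type*} [Fintype K] [DecidableEq K]
    (k : K → K → ℝ)
    (ρ : K → ℝ)
    (hρstat : Matrix.vecMul ρ (gen k) = 0)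
    (H : Finset K)
    (S : K → ℝ)
    (hS : ∀ x ∈ H, (∑ y, k x y * (S y - S x)) + 1 = 0)
    (hS0 : ∀ x ∉ H, S x = 0) :
    ∑ x ∈ Hᶜ, ∑ y ∈ H, ρ x * k x y * S y = ∑ x ∈ H, ρ x := by
  have hstat := sum_mul_gen_mulVec_eq_zero hρstat S
  rw [← sum_add_sum_compl H] at hstat
  have hin : ∑ x ∈ H, ρ x * ∑ y, k x y * (S y - S x) = ∑ x ∈ H, -ρ x :=
    sum_congr rfl fun x hx => by rw [eq_neg_of_add_eq_zero_left (hS x hx)]; ring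
  have hout : ∑ x ∈ Hᶜ, ρ x * ∑ y, k x y * (S y - S x) =
      ∑ x ∈ Hᶜ, ∑ y ∈ H, ρ x * k x y * S y := by
    refine sum_congr rfl fun x hx => ?_
    rw [hS0 x (mem_compl.mp hx), ← sum_subset (subset_univ H) fun y _ hy => by simp [hS0 y hy],
      mul_sum]
    simp only [sub_zero, mul_assoc]
  rw [hin, hout, sum_neg_distrib] at hstat
  linarith

/-- Sum rule for mean escape times: if `𝔖_H` solves `L𝔖_H + 1 = 0` on `H` and vanishes
outside `H`, then `∑_{x ∉ H} ∑_{y ∈ H} ρˢ(x) k(x,y) 𝔖_H(y) = ρˢ(H)`. -/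
theorem escape_time_sum_rule
    {K : Type*} [Fintype K] [DecidableEq K]
    (k : K → K → ℝ) (hk : ∀ x y : K, x ≠ y → 0 ≤ k x y)
    (hirr : StronglyConnected k)
    (ρ : K → ℝ) (hρpos : ∀ x, 0 < ρ x) (hρsum : ∑ x, ρ x = 1)
    (hρstat : Matrix.vecMul ρ (gen k) = 0)
    (H : Finset K) (hH : H.Nonempty) (hHproper : H ≠ Finset.univ)
    (S : K → ℝ)
    (hS : ∀ x ∈ H, (∑ y, k x y * (S y - S x)) + 1 = 0)
    (hS0 : ∀ x ∉ H, S x = 0) :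
    ∑ x ∈ Hᶜ, ∑ y ∈ H, ρ x * k x y * S y = ∑ x ∈ H, ρ x :=
  escape_time_sum_rule_general k ρ hρstat H S hS hS0
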